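/- arXiv:2003.12964 — 2 statements merged into one kernel-verified Lean document; each statement's English description precedes it below -/
import Mathlib

section
/- Let X be a T_4 space (normal and Hausdorff), Y a compact Hausdorff space, and f : X → Y an F_σ-continuous function. Then there exists a unique continuous function f̂ : M(B_1(X)) → Y such that f̂ ∘ ψ = f, where ψ : X → M(B_1(X)) is the map ψ(x) = M_x. -/
open Filter Topology

/-- The ring of Baire one (pointwise limits of sequences of continuous) real-valued
functions on a topological space, as a subring of `X → ℝ`. -/
def baireOne (X : Type*) [TopologicalSpace X] : Subring (X → ℝ) where
  carrier := {f | ∃ F : ℕ → C(X, ℝ), ∀ x, Tendsto (fun n => F n x) atTop (𝓝 (f x))}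
  zero_mem' := ⟨fun _ => 0, fun x => by simpa using tendsto_const_nhds⟩
  one_mem' := ⟨fun _ => 1, fun x => by simpa using tendsto_const_nhds⟩
  add_mem' := by
    rintro f g ⟨F, hF⟩ ⟨G, hG⟩
    exact ⟨fun n => F n + G n, fun x => by simpa using (hF x).add (hG x)⟩
  mul_mem' := by
    rintro f g ⟨F, hF⟩ ⟨G, hG⟩
    exact ⟨fun n => F n * G n, fun x => by simpa using (hF x).mul (hG x)⟩
  neg_mem' := by
    rintro f ⟨F, hF⟩
    exact ⟨fun n => -F n, fun x => by simpa using (hF x).neg⟩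
/-- The structure space of a commutative ring: the set of its maximal ideals. -/
def StructSpace (R : Type*) [CommRing R] : Type _ := {I : Ideal R // I.IsMaximal}

/-- The hull-kernel topology on the structure space, whose closed sets are generated by
the base `{M | f ∈ M}`, `f ∈ R`. -/
instance (R : Type*) [CommRing R] : TopologicalSpace (StructSpace R) :=
  TopologicalSpace.generateFrom {U : Set (StructSpace R) | ∃ f : R, U = {M | f ∉ M.1}}
/-- An `F_σ` subset of a topological space: a countable union of closed sets. -/
def IsFsigma {α : Type*} [TopologicalSpace α] (s : Set α) : Prop :=
  ∃ T : Set (Set α), T.Countable ∧ (∀ t ∈ T, IsClosed t) ∧ s = ⋃₀ T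

/-- A function is `F_σ`-continuous if the preimage of every open set is an `F_σ` set. -/
def FSigmaContinuous {α β : Type*} [TopologicalSpace α] [TopologicalSpace β]
    (f : α → β) : Prop :=
  ∀ U : Set β, IsOpen U → IsFsigma (f ⁻¹' U)

/-!
A maximal ideal `M` of `B₁(X)` determines the filter on `X` generated by the zero sets of its
members, and `F M` is a cluster point in the compact space `Y` of the image of this filter
under `f`. For continuous `u : Y → ℝ`, the map `u ∘ f` is again `F_σ`-continuous, so on a
normal space each sublevel set `{u ∘ f ≤ a}` is the zero set of a Baire one function (a
countable weighted sum of countable infima of Urysohn functions). Since a Baire one function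
without zeros is invertible, `g ∈ M` iff the zero set of `g` meets the zero set of every member
of `M`. Separating two points of `Y` by such a `u` then shows that the cluster point is unique
and that a basic open set `{M | g ∉ M}` is mapped into any prescribed neighbourhood of `F M`,
so `F` is continuous. Finally `F (M_x) = f x` as `x` lies in every zero set of `M_x`, and
uniqueness holds because `ψ` has dense range.
-/

open Set

theorem IsFsigma.exists_eq_iUnion {α : Type*} [TopologicalSpace α] {s : Set α} (h : IsFsigma s) :
    ∃ C : ℕ → Set α, (∀ n, IsClosed (C n)) ∧ s = ⋃ n, C n := by
  obtain ⟨T, hTc, hTcl, rfl⟩ := h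
  rcases T.eq_empty_or_nonempty with rfl | hne
  · exact ⟨fun _ => ∅, fun _ => isClosed_empty, by simp⟩
  · obtain ⟨C, rfl⟩ := hTc.exists_eq_range hne
    exact ⟨C, fun n => hTcl _ ⟨n, rfl⟩, sUnion_range C⟩

theorem Continuous.comp_fSigmaContinuous {α β γ : Type*} [TopologicalSpace α]
    [TopologicalSpace β] [TopologicalSpace γ] {g : β → γ} {f : α → β} (hg : Continuous g)
    (hf : FSigmaContinuous f) : FSigmaContinuous (g ∘ f) :=
  fun U hU => hf _ (hU.preimage hg)

namespace StructSpace

variable {R : Type*} [CommRing R]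

theorem isOpen_setOf_notMem (g : R) : IsOpen {M : StructSpace R | g ∉ M.1} :=
  TopologicalSpace.isOpen_generateFrom_of_mem ⟨g, rfl⟩

theorem isTopologicalBasis :
    TopologicalSpace.IsTopologicalBasis {U : Set (StructSpace R) | ∃ g : R, U = {M | g ∉ M.1}} :=
  TopologicalSpace.isTopologicalBasis_of_subbasis_of_finiteInter rfl
    ⟨⟨1, (eq_univ_of_forall fun M => (Ideal.ne_top_iff_one _).1 M.2.ne_top).symm⟩, by
      rintro _ ⟨g, rfl⟩ _ ⟨k, rfl⟩
      exact ⟨g * k, Set.ext fun M => by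
        simp only [mem_inter_iff, mem_ofPred_eq, M.2.isPrime.mul_mem_iff_mem_or_mem, not_or]⟩⟩

end StructSpace

section BaireOneFunctions

variable {X : Type*} [TopologicalSpace X]

theorem exists_seq_mem_Icc_of_mem_baireOne {g : X → ℝ} (hg : g ∈ baireOne X)
    (hg01 : ∀ x, g x ∈ Icc 0 1) :
    ∃ F : ℕ → C(X, ℝ), (∀ n x, F n x ∈ Icc 0 1) ∧
      ∀ x, Tendsto (fun n => F n x) atTop (𝓝 (g x)) := by
  obtain ⟨F, hF⟩ := hg
  let clamp : C(ℝ, ℝ) := ⟨fun t => projIcc 0 1 zero_le_one t, by fun_prop⟩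
  refine ⟨fun n => clamp.comp (F n), fun n x => (projIcc 0 1 zero_le_one _).2, fun x => ?_⟩
  have hclamp : clamp (g x) = g x := congrArg Subtype.val (projIcc_of_mem zero_le_one (hg01 x))
  exact hclamp ▸ (clamp.continuous.tendsto (g x)).comp (hF x)

theorem tsum_mul_mem_baireOne {ι : Type*} {w : ι → ℝ} (hw : Summable w) {g : ι → X → ℝ}
    (hg : ∀ i, g i ∈ baireOne X) (hg01 : ∀ i x, g i x ∈ Icc 0 1) :
    (fun x => ∑' i, w i * g i x) ∈ baireOne X := by
  choose F hF01 hF using fun i => exists_seq_mem_Icc_of_mem_baireOne (hg i) (hg01 i)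
  have hbound : ∀ n i x, ‖w i * F i n x‖ ≤ |w i| := fun n i x => by
    rw [norm_mul, Real.norm_eq_abs, Real.norm_eq_abs, abs_of_nonneg (hF01 i n x).1]
    exact mul_le_of_le_one_right (abs_nonneg _) (hF01 i n x).2
  refine ⟨fun n => ⟨fun x => ∑' i, w i * F i n x,
    continuous_tsum (fun i => continuous_const.mul (F i n).continuous) hw.abs (hbound n)⟩,
    fun x => ?_⟩
  exact tendsto_tsum_of_dominated_convergence hw.abs (fun i => (hF i x).const_mul _)
    (Eventually.of_forall fun n i => hbound n i x)

theorem exists_baireOne_eq_zero_iff_forall {g : ℕ → X → ℝ} (hg : ∀ n, g n ∈ baireOne X)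
    (hg01 : ∀ n x, g n x ∈ Icc 0 1) :
    ∃ G ∈ baireOne X, (∀ x, G x ∈ Icc 0 1) ∧ ∀ x, G x = 0 ↔ ∀ n, g n x = 0 := by
  set w : ℕ → ℝ := fun n => 1 / 2 / 2 ^ n
  have hw : HasSum w 1 := hasSum_geometric_two' 1
  have hw0 : ∀ n, 0 < w n := fun n => by positivity
  have hterm0 : ∀ x n, 0 ≤ w n * g n x := fun x n => mul_nonneg (hw0 n).le (hg01 n x).1
  have htermw : ∀ x n, w n * g n x ≤ w n := fun x n =>
    mul_le_of_le_one_right (hw0 n).le (hg01 n x).2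
  have hsum : ∀ x, Summable fun n => w n * g n x := fun x =>
    hw.summable.of_nonneg_of_le (hterm0 x) (htermw x)
  refine ⟨fun x => ∑' n, w n * g n x, tsum_mul_mem_baireOne hw.summable hg hg01,
    fun x => ⟨tsum_nonneg (hterm0 x), ?_⟩, fun x => ?_⟩
  · exact ((hsum x).tsum_le_tsum (htermw x) hw.summable).trans hw.tsum_eq.le
  · rw [← (hsum x).hasSum_iff, hasSum_zero_iff_of_nonneg (hterm0 x), funext_iff]
    simp only [Pi.zero_apply, mul_eq_zero, (hw0 _).ne', false_or]

theorem inv_mem_baireOne {g : X → ℝ} (hg : g ∈ baireOne X) (hg0 : ∀ x, g x ≠ 0) :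
    g⁻¹ ∈ baireOne X := by
  obtain ⟨F, hF⟩ := hg
  -- `g⁻¹ = g / g ^ 2`; the denominator is kept away from `0` by `1 / (n + 1) → 0`.
  refine ⟨fun n => ⟨fun x => F n x / max (F n x ^ 2) (1 / (n + 1)), ?_⟩, fun x => ?_⟩
  · exact (F n).continuous.div (by fun_prop)
      fun x => (lt_max_of_lt_right (by positivity)).ne'
  · have hden : Tendsto (fun n : ℕ => max (F n x ^ 2) (1 / (n + 1 : ℝ))) atTop (𝓝 (g x ^ 2)) := by
      simpa [max_eq_left (sq_nonneg (g x))] using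
        ((hF x).pow 2).max tendsto_one_div_add_atTop_nhds_zero_nat
    have := (hF x).div hden (pow_ne_zero 2 (hg0 x))
    rwa [sq, div_self_mul_self'] at this

end BaireOneFunctions

section Separation

variable {X : Type*} [TopologicalSpace X] [NormalSpace X]

theorem exists_baireOne_eqOn_zero_eqOn_one {A B : Set X} (hA : IsFsigma A) (hB : IsClosed B)
    (hAB : Disjoint A B) :
    ∃ φ ∈ baireOne X, (∀ x, φ x ∈ Icc 0 1) ∧ EqOn φ 0 A ∧ EqOn φ 1 B := by
  obtain ⟨C, hC, rfl⟩ := hA.exists_eq_iUnion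
  choose e he0 he1 he01 using fun n =>
    exists_continuous_zero_one_of_isClosed (hC n) hB (hAB.mono_left (subset_iUnion C n))
  let v : ℕ → C(X, ℝ) := fun n => (Finset.range (n + 1)).inf' Finset.nonempty_range_add_one e
  have hv : ∀ n x, v n x = (Finset.range (n + 1)).inf' Finset.nonempty_range_add_one
      fun j => e j x := fun n x => ContinuousMap.inf'_apply _ e x
  have hv_anti : ∀ x, Antitone fun n => v n x := fun x m n hmn => by
    simp only [hv]
    exact Finset.inf'_mono _ (Finset.range_subset_range.2 (by omega)) _
  have hv0 : ∀ n x, 0 ≤ v n x := fun n x => by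
    rw [hv]
    exact Finset.le_inf' _ _ fun j _ => (he01 j x).1
  have hv_le : ∀ n x, v n x ≤ e n x := fun n x => by
    rw [hv]
    exact Finset.inf'_le _ (Finset.self_mem_range_succ n)
  have hvB : ∀ n x, x ∈ B → v n x = 1 := fun n x hx => by
    simp only [hv, fun j => he1 j hx, Pi.one_apply, Finset.inf'_const]
  have hbdd : ∀ x, BddBelow (range fun n => v n x) :=
    fun x => ⟨0, forall_mem_range.2 fun n => hv0 n x⟩
  refine ⟨fun x => ⨅ n, v n x, ⟨v, fun x => tendsto_atTop_ciInf (hv_anti x) (hbdd x)⟩,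
    fun x => ⟨le_ciInf fun n => hv0 n x, ?_⟩, fun x hx => ?_, fun x hx => ?_⟩
  · exact (ciInf_le (hbdd x) 0).trans ((hv_le 0 x).trans (he01 0 x).2)
  · obtain ⟨n, hn⟩ := mem_iUnion.1 hx
    exact le_antisymm ((ciInf_le (hbdd x) n).trans ((hv_le n x).trans (he0 n hn).le))
      (le_ciInf fun n => hv0 n x)
  · simp only [hvB _ x hx, ciInf_const, Pi.one_apply]

theorem exists_baireOne_eqOn_zero_ne_zero {A B : Set X} (hA : IsFsigma A) (hB : IsFsigma B)
    (hAB : Disjoint A B) :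
    ∃ φ ∈ baireOne X, (∀ x, φ x ∈ Icc 0 1) ∧ EqOn φ 0 A ∧ ∀ x ∈ B, φ x ≠ 0 := by
  obtain ⟨C, hC, rfl⟩ := hB.exists_eq_iUnion
  choose g hg hg01 hg0 hg1 using fun n =>
    exists_baireOne_eqOn_zero_eqOn_one hA (hC n) (hAB.mono_right (subset_iUnion C n))
  obtain ⟨G, hG, hG01, hG0⟩ := exists_baireOne_eq_zero_iff_forall hg hg01
  refine ⟨G, hG, hG01, fun x hx => (hG0 x).2 fun n => hg0 n hx, fun x hx hGx => ?_⟩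
  obtain ⟨n, hn⟩ := mem_iUnion.1 hx
  exact one_ne_zero ((hg1 n hn).symm.trans ((hG0 x).1 hGx n))

end Separation

namespace BaireOne

variable {X : Type*} [TopologicalSpace X]

def zeroSet (g : baireOne X) : Set X := {x | (g : X → ℝ) x = 0}

theorem mem_zeroSet {g : baireOne X} {x : X} : x ∈ zeroSet g ↔ (g : X → ℝ) x = 0 := Iff.rfl

theorem zeroSet_mul_self_add_mul_self (g k : baireOne X) :
    zeroSet (g * g + k * k) = zeroSet g ∩ zeroSet k :=
  Set.ext fun _ => mul_self_add_mul_self_eq_zero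

theorem isUnit_of_forall_ne_zero {g : baireOne X} (hg : ∀ x, (g : X → ℝ) x ≠ 0) : IsUnit g :=
  IsUnit.of_mul_eq_one ⟨_, inv_mem_baireOne g.2 hg⟩
    (Subtype.ext (funext fun x => mul_inv_cancel₀ (hg x)))

theorem zeroSet_nonempty_of_mem {I : Ideal (baireOne X)} (hI : I ≠ ⊤) {g : baireOne X}
    (hg : g ∈ I) : (zeroSet g).Nonempty := by
  by_contra hempty
  exact hI (I.eq_top_of_isUnit_mem hg (isUnit_of_forall_ne_zero fun x hx => hempty ⟨x, hx⟩))

theorem mem_iff_forall_zeroSet_inter_nonempty {M : Ideal (baireOne X)} (hM : M.IsMaximal)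
    {g : baireOne X} : g ∈ M ↔ ∀ k ∈ M, (zeroSet k ∩ zeroSet g).Nonempty := by
  refine ⟨fun hg k hk => ?_, fun h => by_contra fun hg => ?_⟩
  · rw [← zeroSet_mul_self_add_mul_self]
    exact zeroSet_nonempty_of_mem hM.ne_top (M.add_mem (M.mul_mem_left k hk) (M.mul_mem_left g hg))
  · obtain ⟨r, c, hc, hrc⟩ := hM.exists_inv hg
    obtain ⟨x, hcx, hgx⟩ := h c hc
    have := congrArg (fun u : baireOne X => (u : X → ℝ) x) hrc
    simp only [Subring.coe_add, Subring.coe_mul, Subring.coe_one, Pi.add_apply, Pi.mul_apply,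
      Pi.one_apply, mem_zeroSet.1 hcx, mem_zeroSet.1 hgx, mul_zero, add_zero] at this
    exact zero_ne_one this

theorem exists_zeroSet_eq_preimage_Iic [NormalSpace X] {h : X → ℝ} (hh : FSigmaContinuous h)
    (a : ℝ) : ∃ g : baireOne X, zeroSet g = h ⁻¹' Iic a := by
  set t : ℕ → ℝ := fun k => a + 1 / (k + 1)
  choose φ hφ hφ01 hφ0 hφne using fun k => exists_baireOne_eqOn_zero_ne_zero
    (hh _ (isOpen_Iio (a := t k))) (hh _ (isOpen_Ioi (a := t k)))
    (Iio_disjoint_Ioi_same.preimage h)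
  obtain ⟨G, hG, -, hG0⟩ := exists_baireOne_eq_zero_iff_forall hφ hφ01
  refine ⟨⟨G, hG⟩, Set.ext fun x => (hG0 x).trans ⟨fun hGx => ?_, fun hx k => hφ0 k ?_⟩⟩
  · by_contra hx
    obtain ⟨k, hk⟩ := exists_nat_one_div_lt (sub_pos.2 (not_le.1 hx : a < h x))
    exact hφne k x (show t k < h x by simp only [t]; linarith) (hGx k)
  · have : (0 : ℝ) < 1 / (k + 1) := by positivity
    change h x < a + 1 / (k + 1)
    linarith [show h x ≤ a from hx]

def zeroSetFilter (I : Ideal (baireOne X)) : Filter X := ⨅ g ∈ I, 𝓟 (zeroSet g)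

theorem hasBasis_zeroSetFilter (I : Ideal (baireOne X)) :
    (zeroSetFilter I).HasBasis (· ∈ I) zeroSet :=
  hasBasis_biInf_principal
    (fun g hg k hk => ⟨g * g + k * k, I.add_mem (I.mul_mem_left g hg) (I.mul_mem_left k hk),
      by simp only [Order.Preimage, zeroSet_mul_self_add_mul_self]; exact
        ⟨inter_subset_left, inter_subset_right⟩⟩)
    ⟨0, I.zero_mem⟩

theorem zeroSetFilter_neBot {I : Ideal (baireOne X)} (hI : I ≠ ⊤) : (zeroSetFilter I).NeBot :=
  (hasBasis_zeroSetFilter I).neBot_iff.2 fun hg => zeroSet_nonempty_of_mem hI hg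

theorem exists_notMem_of_frequently_lt [NormalSpace X] {h : X → ℝ} (hh : FSigmaContinuous h)
    {a b : ℝ} (hab : a < b) :
    ∃ g : baireOne X, ∀ M : Ideal (baireOne X), M.IsMaximal →
      ((∃ᶠ x in zeroSetFilter M, h x < a) → g ∉ M) ∧
      (g ∉ M → ∀ᶠ x in zeroSetFilter M, h x < b) := by
  obtain ⟨g₁, hg₁⟩ := exists_zeroSet_eq_preimage_Iic hh a
  obtain ⟨g₂, hg₂⟩ := exists_zeroSet_eq_preimage_Iic (continuous_neg.comp_fSigmaContinuous hh) (-b)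
  have hg₂_iff : ∀ x, x ∈ zeroSet g₂ ↔ b ≤ h x := fun x => by
    rw [hg₂, mem_preimage, mem_Iic, Function.comp_apply, neg_le_neg_iff]
  refine ⟨g₂, fun M hM => ⟨fun hfreq hg₂M => ?_, fun hg₂M => ?_⟩⟩
  · have hg₁M : g₁ ∈ M := (mem_iff_forall_zeroSet_inter_nonempty hM).2 fun k hk => by
      obtain ⟨x, hxk, hx⟩ := (hasBasis_zeroSetFilter M).frequently_iff.1 hfreq k hk
      exact ⟨x, hxk, hg₁ ▸ hx.le⟩
    obtain ⟨x, hx₁, hx₂⟩ := (mem_iff_forall_zeroSet_inter_nonempty hM).1 hg₂M g₁ hg₁M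
    rw [hg₁] at hx₁
    exact (hab.trans_le ((hg₂_iff x).1 hx₂)).not_ge hx₁
  · obtain ⟨c, hc, hcg₂⟩ : ∃ c ∈ M, ¬(zeroSet c ∩ zeroSet g₂).Nonempty := by
      simpa only [not_forall, exists_prop] using
        (mem_iff_forall_zeroSet_inter_nonempty hM).not.1 hg₂M
    exact (hasBasis_zeroSetFilter M).eventually_iff.2
      ⟨c, hc, fun x hx => not_le.1 fun hbx => hcg₂ ⟨x, hx, (hg₂_iff x).2 hbx⟩⟩

section Extension

variable {Y : Type*} [TopologicalSpace Y] {f : X → Y}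

theorem exists_notMem_forall_clusterPt_mem [NormalSpace X] [CompletelyRegularSpace Y]
    (hf : FSigmaContinuous f) {M : Ideal (baireOne X)} (hM : M.IsMaximal) {y : Y}
    (hy : ClusterPt y (map f (zeroSetFilter M))) {V : Set Y} (hV : IsOpen V) (hyV : y ∈ V) :
    ∃ g ∉ M, ∀ M' : Ideal (baireOne X), M'.IsMaximal → g ∉ M' →
      ∀ y', ClusterPt y' (map f (zeroSetFilter M')) → y' ∈ V := by
  obtain ⟨φ, hφ, hφy, hφV⟩ :=
    CompletelyRegularSpace.completely_regular y Vᶜ hV.isClosed_compl (not_not_intro hyV)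
  set u : Y → ℝ := fun z => φ z
  have hu : Continuous u := continuous_subtype_val.comp hφ
  obtain ⟨g, hg⟩ := exists_notMem_of_frequently_lt (hu.comp_fSigmaContinuous hf)
    (show (1 / 3 : ℝ) < 2 / 3 by norm_num)
  have hyu : ∀ᶠ z in 𝓝 y, u z < 1 / 3 :=
    hu.continuousAt.eventually_lt continuousAt_const (by simp [u, hφy])
  refine ⟨g, (hg M hM).1 (frequently_map.1 (hy.frequently hyu)), fun M' hM' hgM' y' hy' => ?_⟩
  have hy'u : u y' ≤ 2 / 3 := closure_lt_subset_le hu continuous_const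
    (hy'.mem_closure_of_mem _ ((hg M' hM').2 hgM'))
  by_contra hy'V
  have : u y' = 1 := congrArg Subtype.val (hφV hy'V)
  linarith

theorem clusterPt_unique [NormalSpace X] [CompletelyRegularSpace Y] [T1Space Y]
    (hf : FSigmaContinuous f) {M : Ideal (baireOne X)} (hM : M.IsMaximal) {y₁ y₂ : Y}
    (h₁ : ClusterPt y₁ (map f (zeroSetFilter M))) (h₂ : ClusterPt y₂ (map f (zeroSetFilter M))) :
    y₁ = y₂ := by
  by_contra hne
  obtain ⟨g, hg, H⟩ := exists_notMem_forall_clusterPt_mem hf hM h₁ isOpen_compl_singleton hne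
  exact H M hM hg y₂ h₂ rfl

theorem continuous_of_forall_clusterPt [NormalSpace X] [CompletelyRegularSpace Y]
    (hf : FSigmaContinuous f) {F : StructSpace (baireOne X) → Y}
    (hF : ∀ M, ClusterPt (F M) (map f (zeroSetFilter M.1))) : Continuous F := by
  refine continuous_def.2 fun V hV => isOpen_iff_forall_mem_open.2 fun M hM => ?_
  obtain ⟨g, hg, H⟩ := exists_notMem_forall_clusterPt_mem hf M.2 (hF M) hV hM
  exact ⟨{M' | g ∉ M'.1}, fun M' hM' => H M'.1 M'.2 hM' _ (hF M'),
    StructSpace.isOpen_setOf_notMem g, hg⟩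

theorem clusterPt_map_zeroSetFilter_of_mem_zeroSet {M : Ideal (baireOne X)} {x : X}
    (hx : ∀ g ∈ M, x ∈ zeroSet g) : ClusterPt (f x) (map f (zeroSetFilter M)) :=
  (ClusterPt.of_le_nhds (pure_le_nhds (f x))).mono
    (map_mono ((hasBasis_zeroSetFilter M).ge_iff.2 fun g hg => mem_pure.2 (hx g hg)))

theorem denseRange_of_mem_iff {ψ : X → StructSpace (baireOne X)}
    (hψ : ∀ x g, g ∈ (ψ x).1 ↔ x ∈ zeroSet g) : DenseRange ψ := by
  refine StructSpace.isTopologicalBasis.dense_iff.2 ?_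
  rintro _ ⟨g, rfl⟩ ⟨M, hM⟩
  obtain ⟨x, hx⟩ : ∃ x, (g : X → ℝ) x ≠ 0 := by
    by_contra! hzero
    have hg0 : g = 0 := Subtype.ext (funext hzero)
    exact hM (hg0 ▸ M.1.zero_mem)
  exact ⟨ψ x, (hψ x g).not.2 hx, x, rfl⟩

end Extension

end BaireOne

open BaireOne

/-- Every `F_σ`-continuous map from a `T₄` space `X` to a compact Hausdorff space `Y`
extends uniquely to a continuous map on the structure space of `B₁(X)` along
`ψ : x ↦ M_x`. -/
theorem unique_continuous_extension_of_fsigmaContinuous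
    {X Y : Type*} [TopologicalSpace X] [T4Space X]
    [TopologicalSpace Y] [CompactSpace Y] [T2Space Y]
    (f : X → Y) (hf : FSigmaContinuous f)
    (ψ : X → StructSpace ↥(baireOne X))
    (hψ : ∀ x : X, ((ψ x).1 : Set ↥(baireOne X)) = {g : ↥(baireOne X) | (g : X → ℝ) x = 0}) :
    ∃! F : StructSpace ↥(baireOne X) → Y, Continuous F ∧ F ∘ ψ = f := by
  have hψ' : ∀ x g, g ∈ (ψ x).1 ↔ x ∈ zeroSet g := fun x => Set.ext_iff.1 (hψ x)
  choose F hF using fun M : StructSpace (baireOne X) =>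
    haveI := zeroSetFilter_neBot M.2.ne_top
    exists_clusterPt_of_compactSpace (map f (zeroSetFilter M.1))
  have hFψ : F ∘ ψ = f := funext fun x => clusterPt_unique hf (ψ x).2 (hF (ψ x))
    (clusterPt_map_zeroSetFilter_of_mem_zeroSet fun g => (hψ' x g).1)
  have hFc : Continuous F := continuous_of_forall_clusterPt hf hF
  exact ⟨F, ⟨hFc, hFψ⟩, fun F' hF' =>
    (denseRange_of_mem_iff hψ').equalizer hF'.1 hFc (hF'.2.trans hFψ.symm)⟩
end

section
/- Let (X, τ) be a T_4 space (normal and Hausdorff) and let σ be the topology on X having {Z(f) : f ∈ B_1(X, τ)} as a base for its closed sets. Then σ = τ if and only if B_1(X, τ) = C(X, τ), i.e., if and only if every Baire one function on (X, τ) is continuous. -/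
open Filter Topology

/-- The topology `σ` on `X` having the zero sets of Baire one functions as a base for
its closed sets. -/
def sigmaTop (X : Type*) [TopologicalSpace X] : TopologicalSpace X :=
  TopologicalSpace.generateFrom {U : Set X | ∃ f ∈ baireOne X, U = {x | f x ≠ 0}}

open TopologicalSpace

/-!
A Baire one function `f` is `σ`-continuous: every open `U ⊆ ℝ` is the cozero set of a continuous
`g`, so `f ⁻¹' U` is the cozero set of the Baire one function `g ∘ f`. Conversely, in a completely
regular space the cozero sets of continuous functions form a base of `τ`, so `σ` is always finer
than `τ`, and it equals `τ` as soon as the Baire one cozero sets are `τ`-open.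
-/

section BaireOne

variable {X : Type*} [TopologicalSpace X]

lemma continuous_mem_baireOne {f : X → ℝ} (hf : Continuous f) : f ∈ baireOne X :=
  ⟨fun _ => ⟨f, hf⟩, fun _ => tendsto_const_nhds⟩

lemma Continuous.comp_mem_baireOne {g : ℝ → ℝ} (hg : Continuous g) {f : X → ℝ}
    (hf : f ∈ baireOne X) : g ∘ f ∈ baireOne X :=
  let ⟨F, hF⟩ := hf
  ⟨fun n => (⟨g, hg⟩ : C(ℝ, ℝ)).comp (F n), fun x => (hg.tendsto _).comp (hF x)⟩

lemma isOpen_sigmaTop_cozero {f : X → ℝ} (hf : f ∈ baireOne X) :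
    IsOpen[sigmaTop X] {x | f x ≠ 0} :=
  GenerateOpen.basic _ ⟨f, hf, rfl⟩

lemma continuous_sigmaTop_of_mem_baireOne {f : X → ℝ} (hf : f ∈ baireOne X) :
    Continuous[sigmaTop X, _] f := by
  refine continuous_def.2 fun U hU => ?_
  obtain ⟨g, hgU, -⟩ := perfectlyNormalSpace_iff_forall_isClosed_preimage_zero.1 inferInstance
    Uᶜ hU.isClosed_compl
  have hpre : f ⁻¹' U = {x | (g ∘ f) x ≠ 0} := by
    ext x
    rw [Set.mem_preimage, ← not_not (a := f x ∈ U), ← Set.mem_compl_iff, hgU]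
    rfl
  rw [hpre]
  exact isOpen_sigmaTop_cozero (g.continuous.comp_mem_baireOne hf)

lemma sigmaTop_le [CompletelyRegularSpace X] : sigmaTop X ≤ ‹TopologicalSpace X› := by
  intro U hU
  refine (@isOpen_iff_forall_mem_open X (sigmaTop X) U).2 fun x hx => ?_
  obtain ⟨g, hg, hgx, hgU⟩ := CompletelyRegularSpace.completely_regular_isOpen x U hU hx
  refine ⟨{y | 1 - (g y : ℝ) ≠ 0}, fun y hy => ?_,
    isOpen_sigmaTop_cozero (continuous_mem_baireOne (by fun_prop)), by simp [hgx]⟩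
  by_contra hyU
  simp [hgU hyU] at hy

lemma le_sigmaTop_of_forall_continuous (h : ∀ f ∈ baireOne X, Continuous f) :
    ‹TopologicalSpace X› ≤ sigmaTop X := by
  refine le_generateFrom ?_
  rintro _ ⟨f, hf, rfl⟩
  exact isOpen_ne_fun (h f hf) continuous_const

end BaireOne

/-- For a `T₄` space `(X, τ)`: `σ = τ` iff every Baire one function on `(X, τ)` is
continuous, i.e. `B₁(X, τ) = C(X, τ)`. -/
theorem sigma_eq_tau_iff_baireOne_eq_continuous
    (X : Type*) [tau : TopologicalSpace X] [T4Space X] :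
    sigmaTop X = tau ↔ (baireOne X : Set (X → ℝ)) = {f : X → ℝ | Continuous f} := by
  constructor
  · intro hσ
    ext f
    refine ⟨fun hf => ?_, continuous_mem_baireOne⟩
    have hf := continuous_sigmaTop_of_mem_baireOne hf
    rwa [hσ] at hf
  · intro hB
    refine le_antisymm sigmaTop_le (le_sigmaTop_of_forall_continuous fun f hf => ?_)
    exact (hB ▸ hf : f ∈ {f : X → ℝ | Continuous f})
end
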